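/- arXiv:1306.2580 — 2 statements merged into one kernel-verified Lean document; each statement's English description precedes it below -/
import Mathlib

section
/- Let Ω ⊂ ℝⁿ be a bounded measurable set, h > 0, and let ϱ : Ω → ℝ₊ be measurable with ∫_Ω ϱ dx ≤ h|Ω|. Let π₊ : ℝ₊ → ℝ₊ be a nondecreasing measurable function with π₊(ϱ)²/ϱ integrable on {ϱ ≥ 2h}. Then (1/|Ω|)(∫_Ω π₊(ϱ) dx)² ≤ h ∫_Ω π₊(ϱ)²/ϱ dx, and moreover h ∫_{ϱ≥2h} π₊(ϱ)²/ϱ dx ≤ (1/2)∫_Ω π₊(ϱ)² dx. -/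
/-!
Writing `π₊(ϱ) = √ϱ · (π₊(ϱ) / √ϱ)`, the Cauchy–Schwarz inequality gives
`(∫ π₊(ϱ))² ≤ (∫ ϱ) (∫ π₊(ϱ)²/ϱ)`, and the mass bound `∫ ϱ ≤ h |Ω|` turns this into the first
estimate. The second one is pointwise: on `{ϱ ≥ 2h}` we have `h / ϱ ≤ 1/2`.
-/

open MeasureTheory Set Real

namespace MeasureTheory

variable {α : Type*} [MeasurableSpace α] {μ : Measure α}

theorem sq_integral_mul_le_of_nonneg {f g : α → ℝ} (hf0 : 0 ≤ᵐ[μ] f) (hg0 : 0 ≤ᵐ[μ] g)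
    (hf : MemLp f 2 μ) (hg : MemLp g 2 μ) :
    (∫ x, f x * g x ∂μ) ^ 2 ≤ (∫ x, f x ^ 2 ∂μ) * ∫ x, g x ^ 2 ∂μ := by
  have hofReal : ENNReal.ofReal 2 = 2 := by simp
  have holder := integral_mul_le_Lp_mul_Lq_of_nonneg HolderConjugate.two_two hf0 hg0
    (hofReal ▸ hf) (hofReal ▸ hg)
  simp only [rpow_two] at holder
  have hfg : 0 ≤ ∫ x, f x * g x ∂μ :=
    integral_nonneg_of_ae (by filter_upwards [hf0, hg0] with x hfx hgx using mul_nonneg hfx hgx)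
  have hf2 : 0 ≤ ∫ x, f x ^ 2 ∂μ := integral_nonneg fun x => sq_nonneg (f x)
  have hg2 : 0 ≤ ∫ x, g x ^ 2 ∂μ := integral_nonneg fun x => sq_nonneg (g x)
  calc (∫ x, f x * g x ∂μ) ^ 2
      ≤ ((∫ x, f x ^ 2 ∂μ) ^ (1 / (2 : ℝ)) * (∫ x, g x ^ 2 ∂μ) ^ (1 / (2 : ℝ))) ^ 2 :=
        pow_le_pow_left₀ hfg holder 2
    _ = (∫ x, f x ^ 2 ∂μ) * ∫ x, g x ^ 2 ∂μ := by
        rw [mul_pow, ← sqrt_eq_rpow, ← sqrt_eq_rpow, sq_sqrt hf2, sq_sqrt hg2]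

/-- Points where `ρ x = 0` contribute the junk value `u x ^ 2 / 0 = 0` on the right, hence the
hypothesis `hu_of_eq_zero`. -/
theorem sq_integral_le_integral_mul_integral_sq_div {ρ u : α → ℝ} (hρ0 : ∀ x, 0 ≤ ρ x)
    (hu0 : ∀ x, 0 ≤ u x) (hu_of_eq_zero : ∀ x, ρ x = 0 → u x = 0) (hρ : Integrable ρ μ)
    (hu : AEStronglyMeasurable u μ) (hu2 : Integrable (fun x => u x ^ 2 / ρ x) μ) :
    (∫ x, u x ∂μ) ^ 2 ≤ (∫ x, ρ x ∂μ) * ∫ x, u x ^ 2 / ρ x ∂μ := by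
  have hsqrt : AEStronglyMeasurable (fun x => √(ρ x)) μ :=
    continuous_sqrt.comp_aestronglyMeasurable hρ.1
  have hdiv : AEStronglyMeasurable (fun x => u x / √(ρ x)) μ :=
    (hu.aemeasurable.div hsqrt.aemeasurable).aestronglyMeasurable
  have hsplit : ∀ x, √(ρ x) * (u x / √(ρ x)) = u x := fun x => by
    rcases (hρ0 x).eq_or_lt with hx | hx
    · simp [← hx, hu_of_eq_zero x hx.symm]
    · exact mul_div_cancel₀ _ (sqrt_pos.2 hx).ne'
  have hsq_sqrt : ∀ x, √(ρ x) ^ 2 = ρ x := fun x => sq_sqrt (hρ0 x)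
  have hsq_div : ∀ x, (u x / √(ρ x)) ^ 2 = u x ^ 2 / ρ x := fun x => by
    rw [div_pow, hsq_sqrt]
  have key := sq_integral_mul_le_of_nonneg (μ := μ)
    (.of_forall fun x => sqrt_nonneg (ρ x))
    (.of_forall fun x => div_nonneg (hu0 x) (sqrt_nonneg (ρ x)))
    ((memLp_two_iff_integrable_sq hsqrt).2 (by simpa only [hsq_sqrt] using hρ))
    ((memLp_two_iff_integrable_sq hdiv).2 (by simpa only [hsq_div] using hu2))
  simpa only [hsplit, hsq_sqrt, hsq_div] using key

end MeasureTheory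

theorem stmt1_general (n : ℕ)
    (Ω : Set (Fin n → ℝ))
    (h : ℝ) (hh : 0 < h)
    (ϱ : (Fin n → ℝ) → ℝ) (hϱmeas : Measurable ϱ) (hϱnn : ∀ x, 0 ≤ ϱ x)
    (hϱint : IntegrableOn ϱ Ω volume)
    (hmass : ∫ x in Ω, ϱ x ≤ h * (volume Ω).toReal)
    (piP : ℝ → ℝ) (hπnn : ∀ t, 0 ≤ piP t)
    (hπ0 : piP 0 = 0)
    (hint1 : IntegrableOn (fun x => piP (ϱ x)) Ω volume)
    (hint2 : IntegrableOn (fun x => (piP (ϱ x)) ^ 2 / ϱ x) Ω volume)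
    (hint3 : IntegrableOn (fun x => (piP (ϱ x)) ^ 2) Ω volume) :
    (volume Ω).toReal⁻¹ * (∫ x in Ω, piP (ϱ x)) ^ 2
        ≤ h * ∫ x in Ω, (piP (ϱ x)) ^ 2 / ϱ x ∧
    h * ∫ x in Ω ∩ {x | 2 * h ≤ ϱ x}, (piP (ϱ x)) ^ 2 / ϱ x
        ≤ (1 / 2) * ∫ x in Ω, (piP (ϱ x)) ^ 2 := by
  set I := ∫ x in Ω, (piP (ϱ x)) ^ 2 / ϱ x
  have hI : 0 ≤ I := integral_nonneg fun x => div_nonneg (sq_nonneg _) (hϱnn x)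
  constructor
  · have hcs := sq_integral_le_integral_mul_integral_sq_div hϱnn (fun x => hπnn (ϱ x))
      (fun x hx => by rw [hx, hπ0]) hϱint hint1.aestronglyMeasurable hint2
    rcases ENNReal.toReal_nonneg.eq_or_lt with hvol | hvol
    · rw [← hvol, inv_zero, zero_mul]
      positivity
    · rw [inv_mul_le_iff₀ hvol]
      linarith [mul_le_mul_of_nonneg_right hmass hI]
  · have hT : MeasurableSet {x | 2 * h ≤ ϱ x} := measurableSet_le measurable_const hϱmeas
    have hpt : ∀ x, h * {x | 2 * h ≤ ϱ x}.indicator (fun x => (piP (ϱ x)) ^ 2 / ϱ x) x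
        ≤ (1 / 2) * (piP (ϱ x)) ^ 2 := fun x => by
      by_cases hx : x ∈ {x | 2 * h ≤ ϱ x}
      · have hx' : 2 * h ≤ ϱ x := hx
        rw [indicator_of_mem hx, mul_div_assoc', div_le_iff₀ (by linarith)]
        nlinarith [sq_nonneg (piP (ϱ x))]
      · rw [indicator_of_notMem hx, mul_zero]
        positivity
    rw [← setIntegral_indicator hT, ← integral_const_mul, ← integral_const_mul]
    exact integral_mono ((hint2.indicator hT).const_mul h) (hint3.const_mul _) hpt

/-- Cauchy–Schwarz estimate controlling the square of the mean of the positive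
pressure part by weighted L² norms. -/
theorem stmt1 (n : ℕ)
    (Ω : Set (Fin n → ℝ)) (hΩmeas : MeasurableSet Ω) (hΩbdd : Bornology.IsBounded Ω)
    (h : ℝ) (hh : 0 < h)
    (ϱ : (Fin n → ℝ) → ℝ) (hϱmeas : Measurable ϱ) (hϱnn : ∀ x, 0 ≤ ϱ x)
    (hϱint : IntegrableOn ϱ Ω volume)
    (hmass : ∫ x in Ω, ϱ x ≤ h * (volume Ω).toReal)
    (piP : ℝ → ℝ) (hπmeas : Measurable piP) (hπnn : ∀ t, 0 ≤ piP t)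
    (hπ0 : piP 0 = 0) (hπmono : Monotone piP)
    (hint1 : IntegrableOn (fun x => piP (ϱ x)) Ω volume)
    (hint2 : IntegrableOn (fun x => (piP (ϱ x)) ^ 2 / ϱ x) Ω volume)
    (hint3 : IntegrableOn (fun x => (piP (ϱ x)) ^ 2) Ω volume) :
    (volume Ω).toReal⁻¹ * (∫ x in Ω, piP (ϱ x)) ^ 2
        ≤ h * ∫ x in Ω, (piP (ϱ x)) ^ 2 / ϱ x ∧
    h * ∫ x in Ω ∩ {x | 2 * h ≤ ϱ x}, (piP (ϱ x)) ^ 2 / ϱ x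
        ≤ (1 / 2) * ∫ x in Ω, (piP (ϱ x)) ^ 2 :=
  stmt1_general n Ω h hh ϱ hϱmeas hϱnn hϱint hmass piP hπnn hπ0 hint1 hint2 hint3
end

section
/- Let Ω ⊂ ℝⁿ be a bounded measurable set and let P : ℝ₊ → ℝ be continuous and nondecreasing. Suppose ϱ_n, ϱ : Ω → [c, C] (0 < c ≤ C < ∞) are measurable, ϱ_n ⇀* ϱ in L^∞(Ω), P(ϱ_n) ⇀* q in L^∞(Ω), and ∫_Ω P(ϱ_n) ϱ_n dx → ∫_Ω q ϱ dx. Then q = P(ϱ) almost everywhere in Ω. -/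
/-!
Minty's trick. For every bounded test function `w`, monotonicity gives
`0 ≤ ∫ (P(ϱₙ) - P(w)) (ϱₙ - w)`; every term of the expanded integrand converges by weak-*
convergence or by the product assumption, so in the limit `0 ≤ ∫ (q - P(w)) (ϱ - w)`.
Taking `w = ϱ - t φ`, dividing by `t > 0` and letting `t → 0` (dominated convergence, `P`
continuous) gives `0 ≤ ∫ (q - P(ϱ)) φ` for all bounded `φ`; applied to `±𝟙ₛ` this says that
`q` and `P(ϱ)` have the same integral over every measurable set, hence agree a.e.
Extending `P` constantly outside `[c, C]` makes it monotone, continuous and bounded on `ℝ`.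
-/

open MeasureTheory Set Filter Topology
open scoped ENNReal

variable {α ι : Type*} [MeasurableSpace α] {μ : Measure α}

/-- Weak-* convergence in `L^∞(μ)`, the dual of `L¹(μ)`. -/
def WeakStarTendsto (μ : Measure α) (l : Filter ι) (u : ι → α → ℝ) (v : α → ℝ) : Prop :=
  ∀ φ : α → ℝ, Integrable φ μ →
    Tendsto (fun i => ∫ x, u i x * φ x ∂μ) l (𝓝 (∫ x, v x * φ x ∂μ))

theorem WeakStarTendsto.congr_ae {l : Filter ι} {u u' : ι → α → ℝ} {v : α → ℝ}
    (h : WeakStarTendsto μ l u v) (huu' : ∀ i, u i =ᵐ[μ] u' i) : WeakStarTendsto μ l u' v :=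
  fun φ hφ => (h φ hφ).congr fun i =>
    integral_congr_ae <| (huu' i).mono fun x hx => congrArg (· * φ x) hx

-- The third term is `g * h` rather than `h * g` to match the shape of `WeakStarTendsto`.
theorem integral_sub_mul_sub {f g h k : α → ℝ} (hfg : Integrable (f * g) μ)
    (hfk : Integrable (f * k) μ) (hgh : Integrable (g * h) μ) (hhk : Integrable (h * k) μ) :
    ∫ x, (f x - h x) * (g x - k x) ∂μ =
      ∫ x, f x * g x ∂μ - ∫ x, f x * k x ∂μ - ∫ x, g x * h x ∂μ + ∫ x, h x * k x ∂μ := by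
  have hexp : (fun x => (f x - h x) * (g x - k x)) = f * g - f * k - g * h + h * k := by
    ext x
    simp only [Pi.add_apply, Pi.sub_apply, Pi.mul_apply]
    ring
  rw [hexp, integral_add' ((hfg.sub hfk).sub hgh) hhk, integral_sub' (hfg.sub hfk) hgh,
    integral_sub' hfg hfk]
  rfl

theorem memLp_top_comp_of_abs_le [IsFiniteMeasure μ] {Q : ℝ → ℝ} {M : ℝ} (hQ : Measurable Q)
    (hQb : ∀ t, |Q t| ≤ M) {f : α → ℝ} (hf : AEStronglyMeasurable f μ) :
    MemLp (fun x => Q (f x)) ∞ μ :=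
  .of_bound (hQ.comp_aemeasurable hf.aemeasurable).aestronglyMeasurable M
    (.of_forall fun x => hQb (f x))

section Minty

variable [IsFiniteMeasure μ] {l : Filter ι} {Q : ℝ → ℝ} {M : ℝ} {u : ι → α → ℝ} {v q : α → ℝ}

theorem integral_sub_comp_mul_sub_nonneg [l.NeBot] (hQm : Monotone Q) (hQb : ∀ t, |Q t| ≤ M)
    (hu : ∀ i, Integrable (u i) μ) (hv : MemLp v ∞ μ) (hq : Integrable q μ)
    (hwu : WeakStarTendsto μ l u v) (hwQ : WeakStarTendsto μ l (fun i x => Q (u i x)) q)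
    (hprod : Tendsto (fun i => ∫ x, Q (u i x) * u i x ∂μ) l (𝓝 (∫ x, q x * v x ∂μ)))
    {w : α → ℝ} (hw : MemLp w ∞ μ) :
    0 ≤ ∫ x, (q x - Q (w x)) * (v x - w x) ∂μ := by
  have hQw := memLp_top_comp_of_abs_le hQm.measurable hQb hw.1
  have hQu i := memLp_top_comp_of_abs_le hQm.measurable hQb (hu i).1
  have hw1 := hw.integrable le_top
  have hlim : Tendsto (fun i => ∫ x, (Q (u i x) - Q (w x)) * (u i x - w x) ∂μ) l
      (𝓝 (∫ x, (q x - Q (w x)) * (v x - w x) ∂μ)) := by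
    rw [integral_sub_mul_sub (hq.mul_of_top_left hv) (hq.mul_of_top_left hw)
      ((hQw.integrable le_top).mul_of_top_right hv) (hw1.mul_of_top_right hQw)]
    refine (((hprod.sub (hwQ w hw1)).sub (hwu _ (hQw.integrable le_top))).add
      tendsto_const_nhds).congr fun i => ?_
    rw [integral_sub_mul_sub ((hu i).mul_of_top_right (hQu i)) (hw1.mul_of_top_right (hQu i))
      ((hu i).mul_of_top_left hQw) (hw1.mul_of_top_right hQw)]
  exact ge_of_tendsto' hlim fun i =>
    integral_nonneg fun x => (monovary_id_iff.2 hQm).sub_mul_sub_nonneg (w x) (u i x)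

theorem integral_sub_comp_mul_nonneg_of_minty (hQc : Continuous Q) (hQb : ∀ t, |Q t| ≤ M)
    (hv : MemLp v ∞ μ) (hq : Integrable q μ)
    (hminty : ∀ w, MemLp w ∞ μ → 0 ≤ ∫ x, (q x - Q (w x)) * (v x - w x) ∂μ)
    {φ : α → ℝ} (hφ : MemLp φ ∞ μ) :
    0 ≤ ∫ x, (q x - Q (v x)) * φ x ∂μ := by
  have hpos : ∀ t > 0, 0 ≤ ∫ x, (q x - Q (v x - t * φ x)) * φ x ∂μ := by
    intro t ht
    have h := hminty _ (hv.sub (hφ.const_mul t))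
    simp only [Pi.sub_apply, sub_sub_cancel] at h
    simp_rw [mul_left_comm _ t, integral_const_mul] at h
    exact nonneg_of_mul_nonneg_right h ht
  have hlim : Tendsto (fun t => ∫ x, (q x - Q (v x - t * φ x)) * φ x ∂μ) (𝓝[>] 0)
      (𝓝 (∫ x, (q x - Q (v x)) * φ x ∂μ)) := by
    refine tendsto_integral_filter_of_dominated_convergence (fun x => (|q x| + M) * |φ x|)
      (.of_forall fun t => (hq.1.sub (hQc.comp_aestronglyMeasurable
        (hv.1.sub (hφ.1.const_mul t)))).mul hφ.1)
      (.of_forall fun t => .of_forall fun x => ?_)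
      ((hq.abs.add (integrable_const M)).mul_of_top_left hφ.abs)
      (.of_forall fun x => ?_)
    · rw [norm_mul, Real.norm_eq_abs, Real.norm_eq_abs]
      gcongr
      exact (abs_sub _ _).trans (add_le_add_right (hQb _) _)
    · have hcont : Continuous fun t : ℝ => (q x - Q (v x - t * φ x)) * φ x := by fun_prop
      exact (hcont.tendsto' 0 _ (by simp)).mono_left nhdsWithin_le_nhds
  exact ge_of_tendsto hlim (eventually_nhdsWithin_of_forall hpos)

theorem ae_eq_comp_of_minty (hQc : Continuous Q) (hQb : ∀ t, |Q t| ≤ M)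
    (hv : MemLp v ∞ μ) (hq : Integrable q μ)
    (hminty : ∀ w, MemLp w ∞ μ → 0 ≤ ∫ x, (q x - Q (w x)) * (v x - w x) ∂μ) :
    q =ᵐ[μ] fun x => Q (v x) := by
  have hQv := (memLp_top_comp_of_abs_le hQc.measurable hQb hv.1).integrable le_top
  refine Integrable.ae_eq_of_forall_setIntegral_eq _ _ hq hQv fun s hs _ => ?_
  have hind : MemLp (s.indicator fun _ => (1 : ℝ)) ∞ μ := (memLp_const 1).indicator hs
  have hzero : ∫ x, (q x - Q (v x)) * s.indicator (fun _ => 1) x ∂μ = 0 := by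
    refine le_antisymm ?_ (integral_sub_comp_mul_nonneg_of_minty hQc hQb hv hq hminty hind)
    have := integral_sub_comp_mul_nonneg_of_minty hQc hQb hv hq hminty hind.neg
    simpa only [Pi.neg_apply, mul_neg, integral_neg, Left.nonneg_neg_iff] using this
  rw [← sub_eq_zero, ← integral_sub hq.integrableOn hQv.integrableOn, ← integral_indicator hs,
    ← hzero]
  congr 1
  ext x
  by_cases hx : x ∈ s <;> simp [hx]

theorem ae_eq_comp_of_weakStarTendsto [l.NeBot] (hQm : Monotone Q) (hQc : Continuous Q)
    (hQb : ∀ t, |Q t| ≤ M) (hu : ∀ i, Integrable (u i) μ) (hv : MemLp v ∞ μ)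
    (hq : Integrable q μ) (hwu : WeakStarTendsto μ l u v)
    (hwQ : WeakStarTendsto μ l (fun i x => Q (u i x)) q)
    (hprod : Tendsto (fun i => ∫ x, Q (u i x) * u i x ∂μ) l (𝓝 (∫ x, q x * v x ∂μ))) :
    q =ᵐ[μ] fun x => Q (v x) :=
  ae_eq_comp_of_minty hQc hQb hv hq fun _ hw =>
    integral_sub_comp_mul_sub_nonneg hQm hQb hu hv hq hwu hwQ hprod hw

theorem ae_eq_comp_of_weakStarTendsto_of_monotoneOn [l.NeBot] {a b : ℝ} (hab : a ≤ b)
    {P : ℝ → ℝ} (hPc : ContinuousOn P (Icc a b)) (hPm : MonotoneOn P (Icc a b))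
    (hu : ∀ i, AEStronglyMeasurable (u i) μ) (hv : AEStronglyMeasurable v μ)
    (hu_mem : ∀ i, ∀ᵐ x ∂μ, u i x ∈ Icc a b) (hv_mem : ∀ᵐ x ∂μ, v x ∈ Icc a b)
    (hq : Integrable q μ) (hwu : WeakStarTendsto μ l u v)
    (hwP : WeakStarTendsto μ l (fun i x => P (u i x)) q)
    (hprod : Tendsto (fun i => ∫ x, P (u i x) * u i x ∂μ) l (𝓝 (∫ x, q x * v x ∂μ))) :
    q =ᵐ[μ] fun x => P (v x) := by
  set Q := IccExtend hab ((Icc a b).domRestrict P)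
  have hQP {f : α → ℝ} (hf : ∀ᵐ x ∂μ, f x ∈ Icc a b) :
      (fun x => P (f x)) =ᵐ[μ] fun x => Q (f x) :=
    hf.mono fun x hx => (IccExtend_of_mem hab ((Icc a b).domRestrict P) hx).symm
  obtain ⟨M, hM⟩ := isCompact_Icc.exists_bound_of_continuousOn hPc
  have hQ := ae_eq_comp_of_weakStarTendsto ((monotoneOn_iff_monotone.1 hPm).IccExtend hab)
    hPc.domRestrict.Icc_extend' (fun t => hM _ (projIcc a b hab t).2)
    (fun i => (memLp_of_bounded (hu_mem i) (hu i) 1).integrable le_rfl)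
    (memLp_of_bounded hv_mem hv ∞) hq hwu (hwP.congr_ae fun i => hQP (hu_mem i))
    (hprod.congr fun i => integral_congr_ae <|
      (hQP (hu_mem i)).mono fun x hx => congrArg (· * u i x) hx)
  exact hQ.trans (hQP hv_mem).symm

end Minty

theorem stmt10_general (N : ℕ)
    (Ω : Set (Fin N → ℝ)) (hΩmeas : MeasurableSet Ω) (hΩb : Bornology.IsBounded Ω)
    (c C : ℝ) (hc : 0 < c) (hcC : c ≤ C)
    (P : ℝ → ℝ) (hPcont : ContinuousOn P (Ici 0)) (hPmono : MonotoneOn P (Ici 0))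
    (ϱn : ℕ → (Fin N → ℝ) → ℝ) (ϱ q : (Fin N → ℝ) → ℝ)
    (hmeas : ∀ n, Measurable (ϱn n)) (hϱmeas : Measurable ϱ)
    (hbnd : ∀ n, ∀ x ∈ Ω, ϱn n x ∈ Icc c C) (hϱbnd : ∀ x ∈ Ω, ϱ x ∈ Icc c C)
    (hqint : IntegrableOn q Ω volume)
    (hweak1 : ∀ φ : (Fin N → ℝ) → ℝ, IntegrableOn φ Ω volume →
      Tendsto (fun n => ∫ x in Ω, ϱn n x * φ x) atTop
        (nhds (∫ x in Ω, ϱ x * φ x)))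
    (hweak2 : ∀ φ : (Fin N → ℝ) → ℝ, IntegrableOn φ Ω volume →
      Tendsto (fun n => ∫ x in Ω, P (ϱn n x) * φ x) atTop
        (nhds (∫ x in Ω, q x * φ x)))
    (hprod : Tendsto (fun n => ∫ x in Ω, P (ϱn n x) * ϱn n x) atTop
      (nhds (∫ x in Ω, q x * ϱ x))) :
    ∀ᵐ x ∂(volume.restrict Ω), q x = P (ϱ x) := by
  have : IsFiniteMeasure (volume.restrict Ω) :=
    isFiniteMeasure_restrict.2 hΩb.measure_lt_top.ne
  have hIcc : Icc c C ⊆ Ici 0 := Icc_subset_Ici_self.trans (Ici_subset_Ici.2 hc.le)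
  exact ae_eq_comp_of_weakStarTendsto_of_monotoneOn hcC (hPcont.mono hIcc) (hPmono.mono hIcc)
    (fun n => (hmeas n).aestronglyMeasurable) hϱmeas.aestronglyMeasurable
    (fun n => ae_restrict_of_forall_mem hΩmeas (hbnd n)) (ae_restrict_of_forall_mem hΩmeas hϱbnd)
    hqint hweak1 hweak2 hprod

/-- The Minty monotone operator trick: weak-* convergence of `ϱ_n` and `P(ϱ_n)`
together with convergence of `∫ P(ϱ_n)ϱ_n` to `∫ q ϱ` identifies the weak limit
of `P(ϱ_n)` as `P(ϱ)`. -/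
theorem stmt10 (N : ℕ)
    (Ω : Set (Fin N → ℝ)) (hΩmeas : MeasurableSet Ω) (hΩb : Bornology.IsBounded Ω)
    (c C : ℝ) (hc : 0 < c) (hcC : c ≤ C)
    (P : ℝ → ℝ) (hPcont : ContinuousOn P (Ici 0)) (hPmono : MonotoneOn P (Ici 0))
    (ϱn : ℕ → (Fin N → ℝ) → ℝ) (ϱ q : (Fin N → ℝ) → ℝ)
    (hmeas : ∀ n, Measurable (ϱn n)) (hϱmeas : Measurable ϱ) (hqmeas : Measurable q)
    (hbnd : ∀ n, ∀ x ∈ Ω, ϱn n x ∈ Icc c C) (hϱbnd : ∀ x ∈ Ω, ϱ x ∈ Icc c C)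
    (hqint : IntegrableOn q Ω volume)
    (hweak1 : ∀ φ : (Fin N → ℝ) → ℝ, IntegrableOn φ Ω volume →
      Tendsto (fun n => ∫ x in Ω, ϱn n x * φ x) atTop
        (nhds (∫ x in Ω, ϱ x * φ x)))
    (hweak2 : ∀ φ : (Fin N → ℝ) → ℝ, IntegrableOn φ Ω volume →
      Tendsto (fun n => ∫ x in Ω, P (ϱn n x) * φ x) atTop
        (nhds (∫ x in Ω, q x * φ x)))
    (hprod : Tendsto (fun n => ∫ x in Ω, P (ϱn n x) * ϱn n x) atTop
      (nhds (∫ x in Ω, q x * ϱ x))) :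
    ∀ᵐ x ∂(volume.restrict Ω), q x = P (ϱ x) :=
  stmt10_general N Ω hΩmeas hΩb c C hc hcC P hPcont hPmono ϱn ϱ q hmeas hϱmeas hbnd hϱbnd hqint
    hweak1 hweak2 hprod
end
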